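/- arXiv:1104.1217 — 6 statements merged into one kernel-verified Lean document; each statement's English description precedes it below -/
import Mathlib

section
/- Let p = 2ρ for a natural number ρ ≥ 1, and suppose E[|X|^p] < ∞ and E[|Z|^p] < ∞. Let h : ℝ → ℝ be Borel measurable with E[|h(Y)|^p] < ∞, and suppose h satisfies the orthogonality condition: E[(X − h(Y))^{p−1} · η(Y)] = 0 for every Borel measurable η : ℝ → ℝ with E[|X − h(Y)|^{p−1} · |η(Y)|] < ∞. Then h is L_p optimal, i.e., for every Borel measurable g : ℝ → ℝ with E[|X − g(Y)|^p] < ∞ one has E[|X − h(Y)|^p] ≤ E[|X − g(Y)|^p]. -/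
/-!
Write `U = X - h(Y)` and `V = h(Y) - g(Y)`, so that `X - g(Y) = U + V`. Since `p` is even,
`x ↦ x ^ p` is convex, and its tangent line at `U` gives pointwise
`(U + V) ^ p ≥ U ^ p + p U ^ (p - 1) V`. All terms are integrable because `U, V ∈ L^p` and
`|a| ^ (p - 1) |b| ≤ |a| ^ p + |b| ^ p`; taking expectations, the cross term vanishes by the
orthogonality condition applied to `η = h - g`.
-/

open MeasureTheory ProbabilityTheory Set

lemma ConvexOn.add_mul_sub_le_of_hasDerivAt {f : ℝ → ℝ} {f' x : ℝ} (hf : ConvexOn ℝ univ f)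
    (hd : HasDerivAt f f' x) (y : ℝ) : f x + f' * (y - x) ≤ f y := by
  rcases lt_trichotomy y x with hyx | rfl | hxy
  · have := hf.slope_le_of_hasDerivAt (mem_univ y) (mem_univ x) hyx hd
    rw [slope_def_field, div_le_iff₀ (sub_pos.2 hyx)] at this
    linarith
  · simp
  · have := hf.le_slope_of_hasDerivAt (mem_univ x) (mem_univ y) hxy hd
    rw [slope_def_field, le_div_iff₀ (sub_pos.2 hxy)] at this
    linarith

lemma Even.pow_add_mul_pow_pred_mul_le_add_pow {p : ℕ} (hp : Even p) (u v : ℝ) :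
    u ^ p + p * (u ^ (p - 1) * v) ≤ (u + v) ^ p := by
  simpa [mul_assoc] using hp.convexOn_pow.add_mul_sub_le_of_hasDerivAt (hasDerivAt_pow p u) (u + v)

lemma pow_pred_mul_le_pow_add_pow {p : ℕ} (hp : p ≠ 0) {a b : ℝ} (ha : 0 ≤ a) (hb : 0 ≤ b) :
    a ^ (p - 1) * b ≤ a ^ p + b ^ p := by
  calc a ^ (p - 1) * b ≤ max a b ^ (p - 1) * max a b :=
        mul_le_mul (pow_le_pow_left₀ ha (le_max_left a b) _) (le_max_right a b) hb
          (by positivity)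
    _ = max a b ^ p := by rw [← pow_succ, Nat.sub_add_cancel (Nat.one_le_iff_ne_zero.2 hp)]
    _ ≤ a ^ p + b ^ p := by
        rcases max_choice a b with h | h <;> rw [h] <;>
          linarith [pow_nonneg ha p, pow_nonneg hb p]

namespace MeasureTheory

variable {α : Type*} [MeasurableSpace α] {μ : Measure α} {p : ℕ} {U V : α → ℝ}

lemma memLp_iff_integrable_abs_pow {f : α → ℝ} (hf : AEStronglyMeasurable f μ) (hp : p ≠ 0) :
    MemLp f p μ ↔ Integrable (fun x => |f x| ^ p) μ := by
  rw [← integrable_norm_rpow_iff hf (by exact_mod_cast hp) (ENNReal.natCast_ne_top p)]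
  simp [Real.norm_eq_abs]

lemma MemLp.integrable_abs_pow_pred_mul_abs (hp : p ≠ 0) (hU : MemLp U p μ) (hV : MemLp V p μ) :
    Integrable (fun x => |U x| ^ (p - 1) * |V x|) μ := by
  refine ((hU.integrable_norm_pow hp).add (hV.integrable_norm_pow hp)).mono'
    ((hU.1.norm.pow (p - 1)).mul hV.1.norm) (ae_of_all _ fun x => ?_)
  rw [Real.norm_eq_abs, abs_of_nonneg (by positivity)]
  exact pow_pred_mul_le_pow_add_pow hp (abs_nonneg _) (abs_nonneg _)

lemma integral_abs_pow_le_integral_abs_add_pow (hp : Even p) (hp0 : p ≠ 0) (hU : MemLp U p μ)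
    (hV : MemLp V p μ) (horth : ∫ x, U x ^ (p - 1) * V x ∂μ = 0) :
    ∫ x, |U x| ^ p ∂μ ≤ ∫ x, |U x + V x| ^ p ∂μ := by
  have hcross : Integrable (fun x => U x ^ (p - 1) * V x) μ :=
    (hU.integrable_abs_pow_pred_mul_abs hp0 hV).mono' ((hU.1.pow _).mul hV.1)
      (ae_of_all _ fun x => by simp)
  have hUp : Integrable (fun x => U x ^ p) μ := by
    simpa [hp.pow_abs] using hU.integrable_norm_pow hp0
  have hUVp : Integrable (fun x => (U x + V x) ^ p) μ := by
    simpa [hp.pow_abs] using (hU.add hV).integrable_norm_pow hp0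
  simp_rw [hp.pow_abs]
  calc ∫ x, U x ^ p ∂μ = ∫ x, U x ^ p + p * (U x ^ (p - 1) * V x) ∂μ := by
        rw [integral_add hUp (hcross.const_mul _), integral_const_mul, horth, mul_zero, add_zero]
    _ ≤ ∫ x, (U x + V x) ^ p ∂μ :=
        integral_mono (hUp.add (hcross.const_mul _)) hUVp
          fun x => hp.pow_add_mul_pow_pred_mul_le_add_pow (U x) (V x)

end MeasureTheory

theorem orthogonality_implies_Lp_optimal_general
    {Ω : Type*} [MeasurableSpace Ω] (μ : Measure Ω)
    (X Z : Ω → ℝ) (hXm : Measurable X) (hZm : Measurable Z)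
    (ρ : ℕ) (hρ : 1 ≤ ρ) (p : ℕ) (hp : p = 2 * ρ)
    (hXp : Integrable (fun ω => |X ω| ^ p) μ)
    (Y : Ω → ℝ) (hY : Y = fun ω => X ω + Z ω)
    (h : ℝ → ℝ) (hh : Measurable h)
    (hhp : Integrable (fun ω => |h (Y ω)| ^ p) μ)
    (horth : ∀ η : ℝ → ℝ, Measurable η →
      Integrable (fun ω => |X ω - h (Y ω)| ^ (p - 1) * |η (Y ω)|) μ →
      ∫ ω, (X ω - h (Y ω)) ^ (p - 1) * η (Y ω) ∂μ = 0) :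
    ∀ g : ℝ → ℝ, Measurable g →
      Integrable (fun ω => |X ω - g (Y ω)| ^ p) μ →
      ∫ ω, |X ω - h (Y ω)| ^ p ∂μ ≤ ∫ ω, |X ω - g (Y ω)| ^ p ∂μ := by
  intro g hg hgp
  have hp0 : p ≠ 0 := by omega
  have hYm : Measurable Y := hY ▸ hXm.add hZm
  have memLp {f : Ω → ℝ} (hf : Measurable f) (hfp : Integrable (fun ω => |f ω| ^ p) μ) :
      MemLp f p μ :=
    (memLp_iff_integrable_abs_pow hf.aestronglyMeasurable hp0).2 hfp
  have hU : MemLp (fun ω => X ω - h (Y ω)) p μ :=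
    (memLp hXm hXp).sub (memLp (hh.comp hYm) hhp)
  have hV : MemLp (fun ω => h (Y ω) - g (Y ω)) p μ := by
    convert (memLp (hXm.sub (hg.comp hYm)) hgp).sub hU using 1
    funext ω
    simp
  have hcross := horth (fun y => h y - g y) (hh.sub hg) (hU.integrable_abs_pow_pred_mul_abs hp0 hV)
  simpa using integral_abs_pow_le_integral_abs_add_pow ⟨ρ, by omega⟩ hp0 hU hV hcross

/-- If `h` satisfies the orthogonality condition for the `L_p` norm
(`p = 2ρ`, `ρ ≥ 1`), then `h` is an `L_p` optimal estimator of `X` from `Y = X + Z`. -/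
theorem orthogonality_implies_Lp_optimal
    {Ω : Type*} [MeasurableSpace Ω] (μ : Measure Ω) [IsProbabilityMeasure μ]
    (X Z : Ω → ℝ) (hXm : Measurable X) (hZm : Measurable Z)
    (hindep : IndepFun X Z μ)
    (hXint : Integrable X μ) (hZint : Integrable Z μ)
    (hXmean : ∫ ω, X ω ∂μ = 0) (hZmean : ∫ ω, Z ω ∂μ = 0)
    (hX2 : Integrable (fun ω => X ω ^ 2) μ) (hZ2 : Integrable (fun ω => Z ω ^ 2) μ)
    (hXvar : ∫ ω, X ω ^ 2 ∂μ ≠ 0) (hZvar : ∫ ω, Z ω ^ 2 ∂μ ≠ 0)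
    (ρ : ℕ) (hρ : 1 ≤ ρ) (p : ℕ) (hp : p = 2 * ρ)
    (hXp : Integrable (fun ω => |X ω| ^ p) μ)
    (hZp : Integrable (fun ω => |Z ω| ^ p) μ)
    (Y : Ω → ℝ) (hY : Y = fun ω => X ω + Z ω)
    (h : ℝ → ℝ) (hh : Measurable h)
    (hhp : Integrable (fun ω => |h (Y ω)| ^ p) μ)
    (horth : ∀ η : ℝ → ℝ, Measurable η →
      Integrable (fun ω => |X ω - h (Y ω)| ^ (p - 1) * |η (Y ω)|) μ →
      ∫ ω, (X ω - h (Y ω)) ^ (p - 1) * η (Y ω) ∂μ = 0) :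
    ∀ g : ℝ → ℝ, Measurable g →
      Integrable (fun ω => |X ω - g (Y ω)| ^ p) μ →
      ∫ ω, |X ω - h (Y ω)| ^ p ∂μ ≤ ∫ ω, |X ω - g (Y ω)| ^ p ∂μ :=
  orthogonality_implies_Lp_optimal_general μ X Z hXm hZm ρ hρ p hp hXp Y hY h hh hhp horth
end

section
/- Let n ≥ 1 be a natural number and let Z, Z₁, …, Z_n be independent and identically distributed real random variables with zero mean and finite nonzero variance. Set X = Z₁ + ⋯ + Z_n (so X is independent of Z and the SNR is γ = Var(X)/Var(Z) = n). Then the MSE optimal estimator of X from Y = X + Z is linear: E[X | X + Z] = (n/(n+1))·(X + Z) almost surely. In particular, for every natural SNR γ ∈ ℕ a matching source distribution exists regardless of the noise distribution. -/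
/-! If `W₀, …, W_n` are i.i.d., swapping two coordinates preserves the joint law, so the pair
`(Wᵢ, S)` with `S = ∑ₖ Wₖ` has the same law for every `i`. Hence the `E[Wᵢ | S]` all agree, and as
they sum to `S`, each equals `S / (n + 1)`. Summing over `i ≥ 1` gives
`E[X | X + Z] = n S / (n + 1)`. -/

open MeasureTheory ProbabilityTheory

namespace ProbabilityTheory.iIndepFun

variable {Ω ι : Type*} [MeasurableSpace Ω] {μ : Measure Ω} [Fintype ι]

theorem identDistrib_comp_perm {β : Type*} [MeasurableSpace β] {W : ι → Ω → β}
    (hindep : iIndepFun W μ) (hident : ∀ i j, IdentDistrib (W i) (W j) μ μ) (e : ι ≃ ι) :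
    IdentDistrib (fun ω k => W (e k) ω) (fun ω k => W k ω) μ μ where
  aemeasurable_fst := aemeasurable_pi_lambda _ fun k => (hident (e k) k).aemeasurable_fst
  aemeasurable_snd := aemeasurable_pi_lambda _ fun k => (hident k k).aemeasurable_fst
  map_eq := by
    rw [(hindep.precomp e.injective).map_fun_eq_pi_map
        fun k => (hident (e k) k).aemeasurable_fst,
      hindep.map_fun_eq_pi_map fun k => (hident k k).aemeasurable_fst]
    exact congrArg Measure.pi (funext fun k => (hident (e k) k).map_eq)

variable {W : ι → Ω → ℝ}

theorem setIntegral_preimage_sum_eq (hW : ∀ i, Measurable (W i)) (hindep : iIndepFun W μ)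
    (hident : ∀ i j, IdentDistrib (W i) (W j) μ μ) (i j : ι) {B : Set ℝ}
    (hB : MeasurableSet B) :
    ∫ ω in (fun ω => ∑ k, W k ω) ⁻¹' B, W i ω ∂μ =
      ∫ ω in (fun ω => ∑ k, W k ω) ⁻¹' B, W j ω ∂μ := by
  classical
  set e := Equiv.swap i j
  let φ : (ι → ℝ) → ℝ := {x | ∑ k, x k ∈ B}.indicator fun x => x j
  have hφ : Measurable φ := (measurable_pi_apply j).indicator
    (measurableSet_preimage (Finset.measurable_sum _ fun k _ => measurable_pi_apply k) hB)
  have hS : Measurable fun ω => ∑ k, W k ω := Finset.measurable_sum _ fun k _ => hW k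
  have hφe : (fun ω => φ fun k => W (e k) ω) =
      ((fun ω => ∑ k, W k ω) ⁻¹' B).indicator (W i) := by
    funext ω
    simp only [φ, Set.indicator_apply, Set.mem_ofPred_eq, Set.mem_preimage,
      Equiv.sum_comp e (fun k => W k ω), e, Equiv.swap_apply_right]
  have hφid : (fun ω => φ fun k => W k ω) =
      ((fun ω => ∑ k, W k ω) ⁻¹' B).indicator (W j) := by
    funext ω
    simp only [φ, Set.indicator_apply, Set.mem_ofPred_eq, Set.mem_preimage]
  have hlaw := ((hindep.identDistrib_comp_perm hident e).comp hφ).integral_eq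
  rwa [Function.comp_def, Function.comp_def, hφe, hφid, integral_indicator (hS hB),
    integral_indicator (hS hB)] at hlaw

theorem condExp_comap_sum (hW : ∀ i, Measurable (W i)) (hindep : iIndepFun W μ)
    (hident : ∀ i j, IdentDistrib (W i) (W j) μ μ) (hint : ∀ i, Integrable (W i) μ) (i : ι) :
    μ[W i | MeasurableSpace.comap (fun ω => ∑ k, W k ω) inferInstance] =ᵐ[μ]
      fun ω => (Fintype.card ι : ℝ)⁻¹ * ∑ k, W k ω := by
  have := hindep.isProbabilityMeasure
  have hS : Measurable fun ω => ∑ k, W k ω := Finset.measurable_sum _ fun k _ => hW k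
  have hSint : Integrable (fun ω => ∑ k, W k ω) μ := integrable_finsetSum _ fun k _ => hint k
  have hcard : (Fintype.card ι : ℝ) ≠ 0 := Nat.cast_ne_zero.2 (Fintype.card_pos_iff.2 ⟨i⟩).ne'
  refine (ae_eq_condExp_of_forall_setIntegral_eq hS.comap_le (hint i)
    (fun s _ _ => (hSint.const_mul _).integrableOn) ?_ ?_).symm
  · rintro _ ⟨B, hB, rfl⟩ _
    rw [integral_const_mul, integral_finsetSum _ fun k _ => (hint k).integrableOn,
      Finset.sum_congr rfl fun k _ => hindep.setIntegral_preimage_sum_eq hW hident k i hB,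
      Finset.sum_const, Finset.card_univ, nsmul_eq_mul, inv_mul_cancel_left₀ hcard]
  · exact ((measurable_iff_comap_le.2 le_rfl).const_mul _).aestronglyMeasurable

end ProbabilityTheory.iIndepFun

theorem matching_source_exists_of_natural_snr_general
    {Ω : Type*} [MeasurableSpace Ω] (μ : Measure Ω)
    (n : ℕ) (W : Fin (n + 1) → Ω → ℝ)
    (hWm : ∀ i, Measurable (W i))
    (hindep : iIndepFun W μ)
    (hident : ∀ i, IdentDistrib (W i) (W 0) μ μ)
    (hint : Integrable (W 0) μ)
    (X Z : Ω → ℝ) (hZ : Z = W 0) (hX : X = fun ω => ∑ i : Fin n, W i.succ ω) :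
    μ[X | MeasurableSpace.comap (fun ω => X ω + Z ω) inferInstance] =ᵐ[μ]
      fun ω => (n : ℝ) / ((n : ℝ) + 1) * (X ω + Z ω) := by
  have hident_pair i j : IdentDistrib (W i) (W j) μ μ := (hident i).trans (hident j).symm
  have hWint i : Integrable (W i) μ := (hident i).integrable_iff.2 hint
  have hXZ ω : X ω + Z ω = ∑ k, W k ω := by
    rw [hX, hZ, Fin.sum_univ_succ, add_comm]
  have hX_sum : X = ∑ i : Fin n, W i.succ := by
    rw [hX]; funext ω; rw [Finset.sum_apply]
  simp only [hXZ]
  rw [hX_sum]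
  filter_upwards [condExp_finsetSum (fun (i : Fin n) _ => hWint i.succ) _,
    ae_all_iff.2 fun i : Fin n => hindep.condExp_comap_sum hWm hident_pair hWint i.succ]
    with ω hsum hW
  rw [hsum, Finset.sum_apply, Finset.sum_congr rfl fun i _ => hW i, Finset.sum_const,
    Finset.card_univ, Fintype.card_fin, Fintype.card_fin, nsmul_eq_mul]
  push_cast
  ring

/-- Corollary 1 of the paper: if `Z, Z₁, ..., Z_n` are i.i.d. with
zero mean and finite nonzero variance and `X = Z₁ + ⋯ + Z_n`, then the MSE optimal
estimator of `X` from `Y = X + Z` is linear: `E[X | X+Z] = (n/(n+1))·(X+Z)` a.s.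
(Here `W 0` plays the role of `Z` and `W i.succ` the role of `Z_i`.) -/
theorem matching_source_exists_of_natural_snr
    {Ω : Type*} [MeasurableSpace Ω] (μ : Measure Ω) [IsProbabilityMeasure μ]
    (n : ℕ) (hn : 1 ≤ n) (W : Fin (n + 1) → Ω → ℝ)
    (hWm : ∀ i, Measurable (W i))
    (hindep : iIndepFun W μ)
    (hident : ∀ i, IdentDistrib (W i) (W 0) μ μ)
    (hint : Integrable (W 0) μ) (hmean : ∫ ω, W 0 ω ∂μ = 0)
    (h2 : Integrable (fun ω => W 0 ω ^ 2) μ) (hvar : ∫ ω, W 0 ω ^ 2 ∂μ ≠ 0)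
    (X Z : Ω → ℝ) (hZ : Z = W 0) (hX : X = fun ω => ∑ i : Fin n, W i.succ ω) :
    μ[X | MeasurableSpace.comap (fun ω => X ω + Z ω) inferInstance] =ᵐ[μ]
      fun ω => (n : ℝ) / ((n : ℝ) + 1) * (X ω + Z ω) :=
  matching_source_exists_of_natural_snr_general μ n W hWm hindep hident hint X Z hZ hX
end

section
/- Let X and Z be independent real random variables with zero mean and finite nonzero variances, γ = Var(X)/Var(Z), and suppose the MSE optimal estimator is linear: E[X | X + Z] = (γ/(γ+1))·(X + Z) almost surely. Let M ≥ 1 and suppose X and Z have finite absolute moments up to order M + 1. Then for every m with 1 ≤ m ≤ M the moment recursion holds: E[X^{m+1}] = γ·E[Z^{m+1}] + Σ_{i=0}^{m−1} A(γ, m, i)·E[Z^{i+1}]·E[X^{m−i}], where A(γ, m, i) = γ·binom(m, i) − binom(m, i+1). -/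
/-!
If `E[X | Y] = c Y` for `Y = X + Z`, then `E[X g(Y)] = c E[Y g(Y)]` for every test function `g`;
with `c = γ/(γ+1)` and `g(y) = y^m` this reads `E[X Y^m] = γ E[Z Y^m]`. Expanding `(X + Z)^m`
binomially and factoring each mixed moment by independence turns this into a linear relation
between moments of `X` and `Z`, whose extreme terms are `E[X^{m+1}]` and `γ E[Z^{m+1}]`.
-/

open MeasureTheory ProbabilityTheory Finset

lemma pow_mul_pow_mul_add_pow {R : Type*} [CommSemiring R] (x y : R) (a b n : ℕ) :
    x ^ a * y ^ b * (x + y) ^ n =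
      ∑ i ∈ range (n + 1), (n.choose i : R) * (x ^ (i + a) * y ^ (n - i + b)) := by
  rw [add_pow, mul_sum]
  exact sum_congr rfl fun i _ => by ring

lemma moment_recursion_of_sum_choose_eq (x z : ℕ → ℝ) (γ : ℝ) (m : ℕ)
    (hx : x 0 = 1) (hz : z 0 = 1)
    (h : ∑ i ∈ range (m + 1), (m.choose i : ℝ) * (z i * x (m - i + 1)) =
      γ * ∑ i ∈ range (m + 1), (m.choose i : ℝ) * (z (i + 1) * x (m - i))) :
    x (m + 1) = γ * z (m + 1) +
      ∑ i ∈ range m,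
        (γ * (m.choose i : ℝ) - (m.choose (i + 1) : ℝ)) * z (i + 1) * x (m - i) := by
  rw [sum_range_succ', sum_range_succ] at h
  have hreindex : ∀ i ∈ range m, (m.choose (i + 1) : ℝ) * (z (i + 1) * x (m - (i + 1) + 1)) =
      m.choose (i + 1) * (z (i + 1) * x (m - i)) := by
    intro i hi
    rw [show m - (i + 1) + 1 = m - i by have := mem_range.mp hi; omega]
  simp only [sum_congr rfl hreindex, Nat.choose_zero_right, Nat.choose_self, Nat.sub_self,
    Nat.sub_zero, hx, hz, Nat.cast_one] at h
  simp only [sub_mul, sum_sub_distrib, mul_assoc, ← mul_sum] at h ⊢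
  linarith

section Probability

variable {Ω : Type*} {mΩ : MeasurableSpace Ω} {μ : Measure Ω}

lemma integrable_pow_of_integrable_abs_pow {X : Ω → ℝ} (hX : AEStronglyMeasurable X μ)
    {k : ℕ} (h : Integrable (fun ω => |X ω| ^ k) μ) : Integrable (fun ω => X ω ^ k) μ :=
  (integrable_norm_iff (hX.pow k)).mp <| by
    simpa only [Pi.pow_apply, Real.norm_eq_abs, abs_pow] using h

lemma integral_mul_eq_integral_mul_condExp {m : MeasurableSpace Ω} (hm : m ≤ mΩ)
    [SigmaFinite (μ.trim hm)] {f g : Ω → ℝ} (hf : StronglyMeasurable[m] f)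
    (hfg : Integrable (f * g) μ) (hg : Integrable g μ) :
    ∫ ω, f ω * g ω ∂μ = ∫ ω, f ω * μ[g | m] ω ∂μ :=
  (integral_condExp hm).symm.trans
    (integral_congr_ae (condExp_mul_of_stronglyMeasurable_left hf hfg hg))

lemma integral_comp_mul_of_condExp_eq_const_mul [IsFiniteMeasure μ] {X Y : Ω → ℝ}
    (hY : Measurable Y) (hX : Integrable X μ) {c : ℝ}
    (hlin : μ[X | MeasurableSpace.comap Y inferInstance] =ᵐ[μ] fun ω => c * Y ω)
    {g : ℝ → ℝ} (hg : Measurable g) (hgX : Integrable (fun ω => g (Y ω) * X ω) μ) :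
    ∫ ω, g (Y ω) * X ω ∂μ = c * ∫ ω, g (Y ω) * Y ω ∂μ := by
  have hgY : StronglyMeasurable[MeasurableSpace.comap Y inferInstance] (fun ω => g (Y ω)) :=
    (hg.comp (comap_measurable Y)).stronglyMeasurable
  rw [integral_mul_eq_integral_mul_condExp hY.comap_le hgY hgX hX, ← integral_const_mul]
  refine integral_congr_ae ?_
  filter_upwards [hlin] with ω hω
  rw [hω]
  ring

variable {X Z : Ω → ℝ} {a b n : ℕ}

lemma integral_comp_add_mul_eq_of_condExp_eq [IsFiniteMeasure μ] (hX : Measurable X)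
    (hZ : Measurable Z) (hXint : Integrable X μ) {γ : ℝ} (hγ : γ + 1 ≠ 0)
    (hlin : μ[X | MeasurableSpace.comap (fun ω => X ω + Z ω) inferInstance] =ᵐ[μ]
      fun ω => γ / (γ + 1) * (X ω + Z ω))
    {g : ℝ → ℝ} (hg : Measurable g) (hgX : Integrable (fun ω => g (X ω + Z ω) * X ω) μ)
    (hgZ : Integrable (fun ω => g (X ω + Z ω) * Z ω) μ) :
    ∫ ω, g (X ω + Z ω) * X ω ∂μ = γ * ∫ ω, g (X ω + Z ω) * Z ω ∂μ := by
  have h := integral_comp_mul_of_condExp_eq_const_mul (Y := fun ω => X ω + Z ω)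
    (hX.add hZ) hXint hlin hg hgX
  simp only [mul_add] at h
  rw [integral_add hgX hgZ, div_mul_eq_mul_div, eq_div_iff hγ] at h
  linear_combination h

lemma ProbabilityTheory.IndepFun.pow_pow (hXZ : IndepFun X Z μ) (j k : ℕ) :
    IndepFun (fun ω => X ω ^ j) (fun ω => Z ω ^ k) μ :=
  hXZ.comp (measurable_id.pow_const j) (measurable_id.pow_const k)

lemma ProbabilityTheory.IndepFun.integrable_pow_mul_pow (hXZ : IndepFun X Z μ) {j k : ℕ}
    (hX : Integrable (fun ω => X ω ^ j) μ) (hZ : Integrable (fun ω => Z ω ^ k) μ) :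
    Integrable (fun ω => X ω ^ j * Z ω ^ k) μ :=
  (hXZ.pow_pow j k).integrable_mul hX hZ

lemma ProbabilityTheory.IndepFun.integrable_pow_mul_pow_mul_add_pow (hXZ : IndepFun X Z μ)
    (hX : ∀ k ≤ n + a, Integrable (fun ω => X ω ^ k) μ)
    (hZ : ∀ k ≤ n + b, Integrable (fun ω => Z ω ^ k) μ) :
    Integrable (fun ω => X ω ^ a * Z ω ^ b * (X ω + Z ω) ^ n) μ := by
  simp only [pow_mul_pow_mul_add_pow]
  refine integrable_finsetSum _ fun i hi => Integrable.const_mul ?_ _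
  have hi : i ≤ n := Nat.lt_succ_iff.mp (mem_range.mp hi)
  exact hXZ.integrable_pow_mul_pow (hX _ (by omega)) (hZ _ (by omega))

lemma ProbabilityTheory.IndepFun.integral_pow_mul_pow_mul_add_pow (hXZ : IndepFun X Z μ)
    (hX : ∀ k ≤ n + a, Integrable (fun ω => X ω ^ k) μ)
    (hZ : ∀ k ≤ n + b, Integrable (fun ω => Z ω ^ k) μ) :
    ∫ ω, X ω ^ a * Z ω ^ b * (X ω + Z ω) ^ n ∂μ =
      ∑ i ∈ range (n + 1), (n.choose i : ℝ) *
        ((∫ ω, X ω ^ (i + a) ∂μ) * ∫ ω, Z ω ^ (n - i + b) ∂μ) := by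
  have hterm : ∀ i ∈ range (n + 1), Integrable (fun ω => X ω ^ (i + a)) μ ∧
      Integrable (fun ω => Z ω ^ (n - i + b)) μ := fun i hi => by
    have hi : i ≤ n := Nat.lt_succ_iff.mp (mem_range.mp hi)
    exact ⟨hX _ (by omega), hZ _ (by omega)⟩
  simp only [pow_mul_pow_mul_add_pow]
  rw [integral_finsetSum _ fun i hi =>
    (hXZ.integrable_pow_mul_pow (hterm i hi).1 (hterm i hi).2).const_mul _]
  refine sum_congr rfl fun i hi => ?_
  rw [integral_const_mul, (hXZ.pow_pow _ _).integral_fun_mul_eq_mul_integral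
    (hterm i hi).1.aestronglyMeasurable (hterm i hi).2.aestronglyMeasurable]

end Probability

theorem moment_recursion_of_linear_mse_general
    {Ω : Type*} [MeasurableSpace Ω] (μ : Measure Ω) [IsProbabilityMeasure μ]
    (X Z : Ω → ℝ) (hXm : Measurable X) (hZm : Measurable Z)
    (hindep : IndepFun X Z μ)
    (hXint : Integrable X μ)
    (γ : ℝ) (hγ : γ = (∫ ω, X ω ^ 2 ∂μ) / (∫ ω, Z ω ^ 2 ∂μ))
    (hlin : μ[X | MeasurableSpace.comap (fun ω => X ω + Z ω) inferInstance] =ᵐ[μ]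
      fun ω => γ / (γ + 1) * (X ω + Z ω))
    (M : ℕ)
    (hXmom : ∀ k ≤ M + 1, Integrable (fun ω => |X ω| ^ k) μ)
    (hZmom : ∀ k ≤ M + 1, Integrable (fun ω => |Z ω| ^ k) μ) :
    ∀ m, 1 ≤ m → m ≤ M →
      ∫ ω, X ω ^ (m + 1) ∂μ =
        γ * ∫ ω, Z ω ^ (m + 1) ∂μ +
          ∑ i ∈ Finset.range m,
            (γ * (m.choose i : ℝ) - (m.choose (i + 1) : ℝ)) *
              (∫ ω, Z ω ^ (i + 1) ∂μ) * (∫ ω, X ω ^ (m - i) ∂μ) := by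
  intro m _ hmM
  have hX : ∀ k ≤ m + 1, Integrable (fun ω => X ω ^ k) μ := fun k hk =>
    integrable_pow_of_integrable_abs_pow hXm.aestronglyMeasurable (hXmom k (by omega))
  have hZ : ∀ k ≤ m + 1, Integrable (fun ω => Z ω ^ k) μ := fun k hk =>
    integrable_pow_of_integrable_abs_pow hZm.aestronglyMeasurable (hZmom k (by omega))
  have hX₀ : ∀ k ≤ m + 0, Integrable (fun ω => X ω ^ k) μ := fun k hk => hX k (by omega)
  have hZ₀ : ∀ k ≤ m + 0, Integrable (fun ω => Z ω ^ k) μ := fun k hk => hZ k (by omega)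
  have hXexp : ∫ ω, (X ω + Z ω) ^ m * X ω ∂μ =
      ∫ ω, Z ω ^ 0 * X ω ^ 1 * (Z ω + X ω) ^ m ∂μ :=
    integral_congr_ae (ae_of_all _ fun ω => by ring)
  have hZexp : ∫ ω, (X ω + Z ω) ^ m * Z ω ∂μ =
      ∫ ω, Z ω ^ 1 * X ω ^ 0 * (Z ω + X ω) ^ m ∂μ :=
    integral_congr_ae (ae_of_all _ fun ω => by ring)
  have hbalance :
      ∫ ω, (X ω + Z ω) ^ m * X ω ∂μ = γ * ∫ ω, (X ω + Z ω) ^ m * Z ω ∂μ :=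
    integral_comp_add_mul_eq_of_condExp_eq (g := (· ^ m)) hXm hZm hXint
      (by rw [hγ]; positivity) hlin (measurable_id.pow_const m)
      ((hindep.symm.integrable_pow_mul_pow_mul_add_pow hZ₀ hX).congr
        (ae_of_all _ fun ω => by ring))
      ((hindep.symm.integrable_pow_mul_pow_mul_add_pow hZ hX₀).congr
        (ae_of_all _ fun ω => by ring))
  rw [hXexp, hZexp, hindep.symm.integral_pow_mul_pow_mul_add_pow hZ₀ hX,
    hindep.symm.integral_pow_mul_pow_mul_add_pow hZ hX₀] at hbalance
  exact moment_recursion_of_sum_choose_eq (fun k => ∫ ω, X ω ^ k ∂μ)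
    (fun k => ∫ ω, Z ω ^ k ∂μ) γ m (by simp) (by simp)
    (by simpa only [add_zero] using hbalance)

/-- if the MSE optimal estimator is linear,
`E[X | X+Z] = (γ/(γ+1))·(X+Z)` a.s. with `γ = Var(X)/Var(Z)`, and both `X` and `Z`
have finite absolute moments up to order `M+1`, then the moment recursion
`E[X^{m+1}] = γ E[Z^{m+1}] + Σ_{i=0}^{m-1} (γ C(m,i) - C(m,i+1)) E[Z^{i+1}] E[X^{m-i}]`
holds for `1 ≤ m ≤ M`. -/
theorem moment_recursion_of_linear_mse
    {Ω : Type*} [MeasurableSpace Ω] (μ : Measure Ω) [IsProbabilityMeasure μ]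
    (X Z : Ω → ℝ) (hXm : Measurable X) (hZm : Measurable Z)
    (hindep : IndepFun X Z μ)
    (hXint : Integrable X μ) (hZint : Integrable Z μ)
    (hXmean : ∫ ω, X ω ∂μ = 0) (hZmean : ∫ ω, Z ω ∂μ = 0)
    (hX2 : Integrable (fun ω => X ω ^ 2) μ) (hZ2 : Integrable (fun ω => Z ω ^ 2) μ)
    (hXvar : ∫ ω, X ω ^ 2 ∂μ ≠ 0) (hZvar : ∫ ω, Z ω ^ 2 ∂μ ≠ 0)
    (γ : ℝ) (hγ : γ = (∫ ω, X ω ^ 2 ∂μ) / (∫ ω, Z ω ^ 2 ∂μ))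
    (hlin : μ[X | MeasurableSpace.comap (fun ω => X ω + Z ω) inferInstance] =ᵐ[μ]
      fun ω => γ / (γ + 1) * (X ω + Z ω))
    (M : ℕ) (hM : 1 ≤ M)
    (hXmom : ∀ k ≤ M + 1, Integrable (fun ω => |X ω| ^ k) μ)
    (hZmom : ∀ k ≤ M + 1, Integrable (fun ω => |Z ω| ^ k) μ) :
    ∀ m, 1 ≤ m → m ≤ M →
      ∫ ω, X ω ^ (m + 1) ∂μ =
        γ * ∫ ω, Z ω ^ (m + 1) ∂μ +
          ∑ i ∈ Finset.range m,
            (γ * (m.choose i : ℝ) - (m.choose (i + 1) : ℝ)) *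
              (∫ ω, Z ω ^ (i + 1) ∂μ) * (∫ ω, X ω ^ (m - i) ∂μ) :=
  moment_recursion_of_linear_mse_general μ X Z hXm hZm hindep hXint γ hγ hlin M hXmom hZmom
end

section
/- Let p = 2ρ for a natural number ρ ≥ 1, and let X and Z be independent and identically distributed real random variables with E[|X|^p] < ∞. Then the estimator h(Y) = (1/2)·Y is L_p optimal: for every Borel measurable g : ℝ → ℝ with E[|X − g(Y)|^p] < ∞, one has E[|X − (1/2)(X + Z)|^p] ≤ E[|X − g(X + Z)|^p], where Y = X + Z. -/
/-!
If `X` and `Z` are independent and identically distributed, the pair `(X, Z)` is exchangeable, so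
any estimator `g` has the same error `E φ(X - g(Y))` as its mirror `E φ(Z - g(Y))`. For an even
convex loss `φ`, midpoint convexity bounds the error of `Y / 2` pointwise by the average of
the two: `φ((X - Z) / 2) ≤ (φ(X - g(Y)) + φ(Z - g(Y))) / 2`.
-/

open MeasureTheory ProbabilityTheory

section Exchangeable

variable {Ω α : Type*} [MeasurableSpace Ω] [MeasurableSpace α] {μ : Measure Ω} {X Z : Ω → α}

lemma map_prodMk_eq_map_prodMk_swap_of_indepFun [IsFiniteMeasure μ]
    (hX : AEMeasurable X μ) (hZ : AEMeasurable Z μ) (hindep : IndepFun X Z μ)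
    (hident : μ.map X = μ.map Z) :
    μ.map (fun ω => (X ω, Z ω)) = μ.map (fun ω => (Z ω, X ω)) := by
  rw [(indepFun_iff_map_prod_eq_prod_map_map hX hZ).mp hindep,
    (indepFun_iff_map_prod_eq_prod_map_map hZ hX).mp hindep.symm, hident]

variable {E : Type*} [NormedAddCommGroup E] {F : α × α → E}

lemma MeasureTheory.Integrable.comp_swap_of_map_prodMk_eq
    (hmap : μ.map (fun ω => (X ω, Z ω)) = μ.map (fun ω => (Z ω, X ω)))
    (hX : Measurable X) (hZ : Measurable Z) (hF : StronglyMeasurable F)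
    (hint : Integrable (fun ω => F (X ω, Z ω)) μ) : Integrable (fun ω => F (Z ω, X ω)) μ := by
  have hint_map : Integrable F (μ.map (fun ω => (X ω, Z ω))) :=
    (integrable_map_measure hF.aestronglyMeasurable (hX.prodMk hZ).aemeasurable).mpr hint
  rw [hmap] at hint_map
  exact (integrable_map_measure hF.aestronglyMeasurable (hZ.prodMk hX).aemeasurable).mp hint_map

lemma integral_comp_swap_of_map_prodMk_eq [NormedSpace ℝ E]
    (hmap : μ.map (fun ω => (X ω, Z ω)) = μ.map (fun ω => (Z ω, X ω)))
    (hX : Measurable X) (hZ : Measurable Z) (hF : StronglyMeasurable F) :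
    ∫ ω, F (Z ω, X ω) ∂μ = ∫ ω, F (X ω, Z ω) ∂μ := by
  rw [← integral_map (hZ.prodMk hX).aemeasurable hF.aestronglyMeasurable, ← hmap,
    integral_map (hX.prodMk hZ).aemeasurable hF.aestronglyMeasurable]

end Exchangeable

section EvenConvexLoss

variable {φ : ℝ → ℝ}

lemma ConvexOn.map_sub_half_add_le (hφ : ConvexOn ℝ Set.univ φ) (hφ_even : ∀ x, φ (-x) = φ x)
    (x y z : ℝ) : φ (x - (1 / 2) * (x + z)) ≤ (φ (x - y) + φ (z - y)) / 2 := by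
  have hmid := hφ.2 (Set.mem_univ (x - y)) (Set.mem_univ (y - z))
    (by norm_num : (0 : ℝ) ≤ 1 / 2) (by norm_num : (0 : ℝ) ≤ 1 / 2) (by norm_num)
  have hzy : φ (y - z) = φ (z - y) := by rw [← hφ_even, neg_sub]
  simp only [smul_eq_mul, hzy] at hmid
  rw [show x - 1 / 2 * (x + z) = 1 / 2 * (x - y) + 1 / 2 * (y - z) by ring]
  linarith

variable {Ω : Type*} [MeasurableSpace Ω] {μ : Measure Ω} {X Z : Ω → ℝ}

theorem integral_comp_sub_half_add_le_of_map_prodMk_eq (hφ : ConvexOn ℝ Set.univ φ)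
    (hφ_even : ∀ x, φ (-x) = φ x) (hφ_nonneg : 0 ≤ φ)
    (hmap : μ.map (fun ω => (X ω, Z ω)) = μ.map (fun ω => (Z ω, X ω)))
    (hX : Measurable X) (hZ : Measurable Z) {g : ℝ → ℝ} (hg : Measurable g)
    (hint : Integrable (fun ω => φ (X ω - g (X ω + Z ω))) μ) :
    ∫ ω, φ (X ω - (1 / 2) * (X ω + Z ω)) ∂μ ≤ ∫ ω, φ (X ω - g (X ω + Z ω)) ∂μ := by
  set F : ℝ × ℝ → ℝ := fun q => φ (q.1 - g (q.1 + q.2))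
  have hF : StronglyMeasurable F :=
    (continuousOn_univ.mp (hφ.continuousOn isOpen_univ)).measurable.comp
      (measurable_fst.sub (hg.comp (measurable_fst.add measurable_snd))) |>.stronglyMeasurable
  have hint_swap : Integrable (fun ω => F (Z ω, X ω)) μ :=
    hint.comp_swap_of_map_prodMk_eq hmap hX hZ hF
  have hmirror (ω : Ω) : F (Z ω, X ω) = φ (Z ω - g (X ω + Z ω)) := by
    simp only [F, add_comm (Z ω)]
  calc ∫ ω, φ (X ω - (1 / 2) * (X ω + Z ω)) ∂μ
      ≤ ∫ ω, (F (X ω, Z ω) + F (Z ω, X ω)) / 2 ∂μ := by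
        refine integral_mono_of_nonneg (.of_forall fun ω => hφ_nonneg _)
          ((hint.add hint_swap).div_const 2) (.of_forall fun ω => ?_)
        dsimp only
        rw [hmirror]
        exact hφ.map_sub_half_add_le hφ_even _ _ _
    _ = ∫ ω, F (X ω, Z ω) ∂μ := by
        rw [integral_div, integral_add hint hint_swap,
          integral_comp_swap_of_map_prodMk_eq hmap hX hZ hF]
        ring

end EvenConvexLoss

theorem half_linear_Lp_optimal_of_iid_general
    {Ω : Type*} [MeasurableSpace Ω] (μ : Measure Ω) [IsProbabilityMeasure μ]
    (X Z : Ω → ℝ) (hXm : Measurable X) (hZm : Measurable Z)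
    (hindep : IndepFun X Z μ)
    (hident : Measure.map X μ = Measure.map Z μ)
    (ρ : ℕ) (p : ℕ) (hp : p = 2 * ρ) :
    ∀ g : ℝ → ℝ, Measurable g →
      Integrable (fun ω => |X ω - g (X ω + Z ω)| ^ p) μ →
      ∫ ω, |X ω - (1 / 2 : ℝ) * (X ω + Z ω)| ^ p ∂μ ≤
        ∫ ω, |X ω - g (X ω + Z ω)| ^ p ∂μ := by
  intro g hg hint
  have hp_even : Even p := ⟨ρ, by omega⟩
  have hmap := map_prodMk_eq_map_prodMk_swap_of_indepFun hXm.aemeasurable hZm.aemeasurable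
    hindep hident
  simp only [hp_even.pow_abs] at hint ⊢
  exact integral_comp_sub_half_add_le_of_map_prodMk_eq hp_even.convexOn_pow
    (fun x => hp_even.neg_pow x) (fun x => hp_even.pow_nonneg x) hmap hXm hZm hg hint

/-- Theorem 3 of the paper, `L_p` case: if `X` and `Z` are
independent and identically distributed with `E[|X|^p] < ∞` for `p = 2ρ` (`ρ ≥ 1`),
then `h(Y) = (1/2)Y` is `L_p` optimal for estimating `X` from `Y = X + Z`. -/
theorem half_linear_Lp_optimal_of_iid
    {Ω : Type*} [MeasurableSpace Ω] (μ : Measure Ω) [IsProbabilityMeasure μ]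
    (X Z : Ω → ℝ) (hXm : Measurable X) (hZm : Measurable Z)
    (hindep : IndepFun X Z μ)
    (hident : Measure.map X μ = Measure.map Z μ)
    (ρ : ℕ) (hρ : 1 ≤ ρ) (p : ℕ) (hp : p = 2 * ρ)
    (hXp : Integrable (fun ω => |X ω| ^ p) μ) :
    ∀ g : ℝ → ℝ, Measurable g →
      Integrable (fun ω => |X ω - g (X ω + Z ω)| ^ p) μ →
      ∫ ω, |X ω - (1 / 2 : ℝ) * (X ω + Z ω)| ^ p ∂μ ≤
        ∫ ω, |X ω - g (X ω + Z ω)| ^ p ∂μ :=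
  half_linear_Lp_optimal_of_iid_general μ X Z hXm hZm hindep hident ρ p hp
end

section
/- Let X and Z be independent Gaussian random variables, X ~ N(0, σ_x²) and Z ~ N(0, σ_z²) with σ_x², σ_z² > 0, let Y = X + Z, γ = σ_x²/σ_z², and k = γ/(γ+1) = σ_x²/(σ_x² + σ_z²). Then the estimation error X − kY is independent of Y, and consequently for every even natural number p = 2ρ (ρ ≥ 1) the linear estimator kY is L_p optimal: E[|X − kY|^p] ≤ E[|X − g(Y)|^p] for every Borel measurable g : ℝ → ℝ with E[|X − g(Y)|^p] < ∞. -/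
open MeasureTheory ProbabilityTheory

/-! The error `W = X - kY` and the observation `Y = X + Z` are jointly Gaussian and, `k` being
the regression coefficient `cov(X, Y) / Var Y`, uncorrelated; hence they are independent. `W` is
moreover centred, so its law is symmetric. For an even convex `φ` such as `|x| ^ (2ρ)` and any
shift `c`, symmetry and convexity give `E φ(W) ≤ (E φ(W - c) + E φ(W + c)) / 2 = E φ(W - c)`.
By independence we may integrate this over the law of `Y` with `c = g(Y) - kY`, which gives
`E φ(W) ≤ E φ(X - g(Y))`. -/

theorem integral_le_integral_of_lintegral_ofReal_le {α : Type*} [MeasurableSpace α]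
    {μ : Measure α} {f g : α → ℝ} (hf : 0 ≤ᵐ[μ] f) (hf_meas : AEStronglyMeasurable f μ)
    (hg : 0 ≤ᵐ[μ] g) (hg_int : Integrable g μ)
    (h : ∫⁻ a, ENNReal.ofReal (f a) ∂μ ≤ ∫⁻ a, ENNReal.ofReal (g a) ∂μ) :
    ∫ a, f a ∂μ ≤ ∫ a, g a ∂μ := by
  rw [integral_eq_lintegral_of_nonneg_ae hf hf_meas,
    integral_eq_lintegral_of_nonneg_ae hg hg_int.aestronglyMeasurable]
  exact ENNReal.toReal_mono hg_int.lintegral_lt_top.ne h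

section SymmetricConvex

variable {E : Type*} [NormedAddCommGroup E] [NormedSpace ℝ E] [FiniteDimensional ℝ E]
  [MeasurableSpace E] [BorelSpace E] {φ : E → ℝ}

theorem lintegral_ofReal_le_lintegral_ofReal_sub_of_convexOn (ν : Measure E) [ν.IsNegInvariant]
    (hφ : ConvexOn ℝ Set.univ φ) (hφ_even : ∀ x, φ (-x) = φ x) (c : E) :
    ∫⁻ x, ENNReal.ofReal (φ x) ∂ν ≤ ∫⁻ x, ENNReal.ofReal (φ (x - c)) ∂ν := by
  have hφc : Continuous φ := continuousOn_univ.mp (hφ.continuousOn isOpen_univ)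
  have hmid (x : E) : 2 * ENNReal.ofReal (φ x) ≤
      ENNReal.ofReal (φ (x - c)) + ENNReal.ofReal (φ (x + c)) := by
    have h := hφ.2 (Set.mem_univ (x - c)) (Set.mem_univ (x + c))
      (by norm_num : (0 : ℝ) ≤ 1 / 2) (by norm_num : (0 : ℝ) ≤ 1 / 2) (by norm_num)
    have hx : (1 / 2 : ℝ) • (x - c) + (1 / 2 : ℝ) • (x + c) = x := by
      rw [← smul_add, sub_add_add_cancel, one_div, ← two_smul ℝ x, smul_smul]; norm_num
    rw [hx, smul_eq_mul, smul_eq_mul] at h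
    calc 2 * ENNReal.ofReal (φ x) = ENNReal.ofReal (2 * φ x) := by
          rw [ENNReal.ofReal_mul zero_le_two, ENNReal.ofReal_ofNat]
      _ ≤ ENNReal.ofReal (φ (x - c) + φ (x + c)) := ENNReal.ofReal_le_ofReal (by linarith)
      _ ≤ _ := ENNReal.ofReal_add_le
  have hsymm : ∫⁻ x, ENNReal.ofReal (φ (x + c)) ∂ν = ∫⁻ x, ENNReal.ofReal (φ (x - c)) ∂ν := by
    rw [← lintegral_neg_eq_self]
    simp_rw [← hφ_even (-_ + c), neg_add, neg_neg, ← sub_eq_add_neg]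
  refine (ENNReal.mul_le_mul_iff_right two_ne_zero ENNReal.ofNat_ne_top).mp ?_
  calc 2 * ∫⁻ x, ENNReal.ofReal (φ x) ∂ν = ∫⁻ x, 2 * ENNReal.ofReal (φ x) ∂ν :=
        (lintegral_const_mul' _ _ ENNReal.ofNat_ne_top).symm
    _ ≤ ∫⁻ x, ENNReal.ofReal (φ (x - c)) + ENNReal.ofReal (φ (x + c)) ∂ν := lintegral_mono hmid
    _ = 2 * ∫⁻ x, ENNReal.ofReal (φ (x - c)) ∂ν := by
      rw [lintegral_add_left (by fun_prop), hsymm, two_mul]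

variable {Ω β : Type*} [MeasurableSpace Ω] [MeasurableSpace β] {μ : Measure Ω}
  [IsProbabilityMeasure μ] {W : Ω → E} {Y : Ω → β}

theorem lintegral_ofReal_le_lintegral_ofReal_sub_of_indepFun (hW : Measurable W)
    (hY : Measurable Y) (hWY : IndepFun W Y μ) [(μ.map W).IsNegInvariant]
    (hφ : ConvexOn ℝ Set.univ φ) (hφ_even : ∀ x, φ (-x) = φ x) {f : β → E} (hf : Measurable f) :
    ∫⁻ ω, ENNReal.ofReal (φ (W ω)) ∂μ ≤ ∫⁻ ω, ENNReal.ofReal (φ (W ω - f (Y ω))) ∂μ := by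
  have hφc : Continuous φ := continuousOn_univ.mp (hφ.continuousOn isOpen_univ)
  have hlaw : μ.map (fun ω ↦ (W ω, Y ω)) = (μ.map W).prod (μ.map Y) :=
    (indepFun_iff_map_prod_eq_prod_map_map hW.aemeasurable hY.aemeasurable).mp hWY
  have : IsProbabilityMeasure (μ.map Y) := Measure.isProbabilityMeasure_map hY.aemeasurable
  have hF : Measurable fun p : E × β ↦ ENNReal.ofReal (φ (p.1 - f p.2)) := by fun_prop
  calc ∫⁻ ω, ENNReal.ofReal (φ (W ω)) ∂μ
      = ∫⁻ _y, ∫⁻ w, ENNReal.ofReal (φ w) ∂(μ.map W) ∂(μ.map Y) := by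
        rw [lintegral_const, measure_univ, mul_one, lintegral_map (by fun_prop) hW]
    _ ≤ ∫⁻ y, ∫⁻ w, ENNReal.ofReal (φ (w - f y)) ∂(μ.map W) ∂(μ.map Y) :=
        lintegral_mono fun y ↦
          lintegral_ofReal_le_lintegral_ofReal_sub_of_convexOn _ hφ hφ_even (f y)
    _ = ∫⁻ p, ENNReal.ofReal (φ (p.1 - f p.2)) ∂(μ.map fun ω ↦ (W ω, Y ω)) := by
        rw [hlaw, lintegral_prod_symm _ hF.aemeasurable]
    _ = ∫⁻ ω, ENNReal.ofReal (φ (W ω - f (Y ω))) ∂μ := lintegral_map hF (hW.prodMk hY)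

theorem integral_le_integral_sub_of_indepFun (hW : Measurable W)
    (hY : Measurable Y) (hWY : IndepFun W Y μ) [(μ.map W).IsNegInvariant]
    (hφ : ConvexOn ℝ Set.univ φ) (hφ_even : ∀ x, φ (-x) = φ x) (hφ_nonneg : 0 ≤ φ)
    {f : β → E} (hf : Measurable f) (hint : Integrable (fun ω ↦ φ (W ω - f (Y ω))) μ) :
    ∫ ω, φ (W ω) ∂μ ≤ ∫ ω, φ (W ω - f (Y ω)) ∂μ := by
  have hφc : Continuous φ := continuousOn_univ.mp (hφ.continuousOn isOpen_univ)
  exact integral_le_integral_of_lintegral_ofReal_le (.of_forall fun _ ↦ hφ_nonneg _)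
    (by fun_prop) (.of_forall fun _ ↦ hφ_nonneg _) hint
    (lintegral_ofReal_le_lintegral_ofReal_sub_of_indepFun hW hY hWY hφ hφ_even hf)

end SymmetricConvex

namespace ProbabilityTheory

variable {Ω : Type*} [MeasurableSpace Ω] {P : Measure Ω}

instance isNegInvariant_gaussianReal_zero (v : NNReal) : (gaussianReal 0 v).IsNegInvariant :=
  ⟨by simpa [Measure.neg_def] using gaussianReal_map_neg (μ := 0) (v := v)⟩

theorem HasGaussianLaw.isNegInvariant_map {W : Ω → ℝ} (hW : HasGaussianLaw W P)
    (hW_mean : ∫ ω, W ω ∂P = 0) : (P.map W).IsNegInvariant := by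
  rw [hW.map_eq_gaussianReal, hW_mean]
  infer_instance

theorem HasGaussianLaw.indepFun_sub_mul_of_mul_variance_eq {X Y : Ω → ℝ}
    (hXY : HasGaussianLaw (fun ω ↦ (X ω, Y ω)) P) {c : ℝ} (hc : c * Var[Y; P] = cov[X, Y; P]) :
    IndepFun (fun ω ↦ X ω - c * Y ω) Y P := by
  have : IsProbabilityMeasure P := hXY.isProbabilityMeasure
  have hX := hXY.fst.memLp_two
  have hY := hXY.snd.memLp_two
  have hL : HasGaussianLaw (fun ω ↦ (X ω - c * Y ω, Y ω)) P :=
    hXY.map_fun ((ContinuousLinearMap.fst ℝ ℝ ℝ - c • ContinuousLinearMap.snd ℝ ℝ ℝ).prod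
      (ContinuousLinearMap.snd ℝ ℝ ℝ))
  refine hL.indepFun_of_covariance_eq_zero ?_
  rw [covariance_fun_sub_left hX (hY.const_mul c) hY, covariance_const_mul_left,
    covariance_self hY.aemeasurable, hc, sub_self]

theorem indepFun_sub_mul_add_of_hasLaw_gaussianReal {X Z : Ω → ℝ} {mx mz : ℝ} {vx vz : NNReal}
    (hX : HasLaw X (gaussianReal mx vx) P) (hZ : HasLaw Z (gaussianReal mz vz) P)
    (hXZ : IndepFun X Z P) {k : ℝ} (hk : k * (vx + vz) = vx) :
    IndepFun (fun ω ↦ X ω - k * (X ω + Z ω)) (fun ω ↦ X ω + Z ω) P := by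
  have : IsProbabilityMeasure P := hX.hasGaussianLaw.isProbabilityMeasure
  have hX2 := hX.hasGaussianLaw.memLp_two
  have hZ2 := hZ.hasGaussianLaw.memLp_two
  have hXY : HasGaussianLaw (fun ω ↦ (X ω, X ω + Z ω)) P :=
    (hXZ.hasGaussianLaw hX.hasGaussianLaw hZ.hasGaussianLaw).map_fun
      ((ContinuousLinearMap.fst ℝ ℝ ℝ).prod
        (ContinuousLinearMap.fst ℝ ℝ ℝ + ContinuousLinearMap.snd ℝ ℝ ℝ))
  refine hXY.indepFun_sub_mul_of_mul_variance_eq (?_ : k * Var[X + Z; P] = cov[X, X + Z; P])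
  rw [hXZ.variance_add hX2 hZ2, covariance_add_right hX2 hX2 hZ2,
    covariance_self hX.aemeasurable, hXZ.covariance_eq_zero hX2 hZ2, add_zero,
    hX.variance_eq, hZ.variance_eq, variance_id_gaussianReal, variance_id_gaussianReal, hk]

end ProbabilityTheory

theorem gaussian_linear_estimator_error_indep_and_Lp_optimal_general
    {Ω : Type*} [MeasurableSpace Ω] (μ : Measure Ω) [IsProbabilityMeasure μ]
    (X Z : Ω → ℝ) (hXm : Measurable X) (hZm : Measurable Z)
    (hindep : IndepFun X Z μ)
    (vx vz : NNReal) (hvzpos : 0 < vz)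
    (hlawX : Measure.map X μ = gaussianReal 0 vx)
    (hlawZ : Measure.map Z μ = gaussianReal 0 vz)
    (k : ℝ) (hk : k = (vx : ℝ) / ((vx : ℝ) + (vz : ℝ))) :
    IndepFun (fun ω => X ω - k * (X ω + Z ω)) (fun ω => X ω + Z ω) μ ∧
    ∀ ρ : ℕ, 1 ≤ ρ → ∀ g : ℝ → ℝ, Measurable g →
      Integrable (fun ω => |X ω - g (X ω + Z ω)| ^ (2 * ρ)) μ →
      ∫ ω, |X ω - k * (X ω + Z ω)| ^ (2 * ρ) ∂μ ≤
        ∫ ω, |X ω - g (X ω + Z ω)| ^ (2 * ρ) ∂μ := by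
  have hX : HasLaw X (gaussianReal 0 vx) μ := ⟨hXm.aemeasurable, hlawX⟩
  have hZ : HasLaw Z (gaussianReal 0 vz) μ := ⟨hZm.aemeasurable, hlawZ⟩
  have hvxz : (vx : ℝ) + vz ≠ 0 := (add_pos_of_nonneg_of_pos vx.2 hvzpos).ne'
  have hWY := indepFun_sub_mul_add_of_hasLaw_gaussianReal hX hZ hindep (k := k)
    (by rw [hk, div_mul_cancel₀ _ hvxz])
  refine ⟨hWY, fun ρ _ g hg hint ↦ ?_⟩
  have hW : HasGaussianLaw (fun ω ↦ X ω - k * (X ω + Z ω)) μ :=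
    (hindep.hasGaussianLaw hX.hasGaussianLaw hZ.hasGaussianLaw).map_fun
      (ContinuousLinearMap.fst ℝ ℝ ℝ -
        k • (ContinuousLinearMap.fst ℝ ℝ ℝ + ContinuousLinearMap.snd ℝ ℝ ℝ))
  have hXi := hX.hasGaussianLaw.integrable
  have hZi := hZ.hasGaussianLaw.integrable
  have := hW.isNegInvariant_map <| by
    rw [integral_sub hXi (by fun_prop), integral_const_mul, integral_add hXi hZi,
      hX.integral_eq, hZ.integral_eq, integral_id_gaussianReal, integral_id_gaussianReal]
    simp
  have hφ : ConvexOn ℝ Set.univ fun x : ℝ ↦ |x| ^ (2 * ρ) := by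
    simpa only [(even_two_mul ρ).pow_abs] using (even_two_mul ρ).convexOn_pow
  have hle := integral_le_integral_sub_of_indepFun (f := fun y ↦ g y - k * y) (by fun_prop)
    (by fun_prop) hWY hφ (fun x ↦ by rw [abs_neg]) (fun x ↦ by positivity) (by fun_prop)
    (by simpa only [sub_sub_sub_cancel_right] using hint)
  simpa only [sub_sub_sub_cancel_right] using hle

/-- for independent Gaussians `X ∼ N(0, σ_x²)`, `Z ∼ N(0, σ_z²)` and
`k = σ_x²/(σ_x² + σ_z²)`, the estimation error `X - kY` is independent of
`Y = X + Z`, and consequently for every even `p = 2ρ` (`ρ ≥ 1`) the linear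
estimator `kY` is `L_p` optimal. -/
theorem gaussian_linear_estimator_error_indep_and_Lp_optimal
    {Ω : Type*} [MeasurableSpace Ω] (μ : Measure Ω) [IsProbabilityMeasure μ]
    (X Z : Ω → ℝ) (hXm : Measurable X) (hZm : Measurable Z)
    (hindep : IndepFun X Z μ)
    (vx vz : NNReal) (hvxpos : 0 < vx) (hvzpos : 0 < vz)
    (hlawX : Measure.map X μ = gaussianReal 0 vx)
    (hlawZ : Measure.map Z μ = gaussianReal 0 vz)
    (k : ℝ) (hk : k = (vx : ℝ) / ((vx : ℝ) + (vz : ℝ))) :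
    IndepFun (fun ω => X ω - k * (X ω + Z ω)) (fun ω => X ω + Z ω) μ ∧
    ∀ ρ : ℕ, 1 ≤ ρ → ∀ g : ℝ → ℝ, Measurable g →
      Integrable (fun ω => |X ω - g (X ω + Z ω)| ^ (2 * ρ)) μ →
      ∫ ω, |X ω - k * (X ω + Z ω)| ^ (2 * ρ) ∂μ ≤
        ∫ ω, |X ω - g (X ω + Z ω)| ^ (2 * ρ) ∂μ :=
  gaussian_linear_estimator_error_indep_and_Lp_optimal_general μ X Z hXm hZm hindep vx vz hvzpos
    hlawX hlawZ k hk
end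

section
/- Suppose X and Z have finite second moments and the MSE optimal estimator is linear: E[X | Y] = K·Y almost surely. Let u_i denote the i-th row of U, so that [UX]_i = ⟨u_i, X⟩ and [UZ]_i = ⟨u_i, Z⟩ are real random variables. Then for every i ∈ {1, …, m} the scalar characteristic functions satisfy the matching condition F′_{[UX]_i}(ω) · F_{[UZ]_i}(ω) = λ_i · F_{[UX]_i}(ω) · F′_{[UZ]_i}(ω) for all ω ∈ ℝ (the scalar condition F_{[UX]_i} = F_{[UZ]_i}^{λ_i} in logarithmic-derivative form). -/
/-!
Fix `ω` and the row `u = Uᵢ`, and put `χ v = exp (i ω ⟨u, v⟩)`. Testing `E[X | Y] = K Y` against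
the bounded `σ(Y)`-measurable `χ(Y)` gives `E[X χ(Y)] = K E[Y χ(Y)]`; since `χ(Y) = χ(X) χ(Z)`
and `X ⟂ Z`, this reads `v = K (v + w)` with `v = F_{[UZ]ᵢ}(ω) E[X χ(X)]` and
`w = F_{[UX]ᵢ}(ω) E[Z χ(Z)]`. For `K = R_X (R_X + R_Z)⁻¹` this forces `v = R_X R_Z⁻¹ w`, and `U`
turns `R_X R_Z⁻¹` into `Λ`, so `(U v)ᵢ = λᵢ (U w)ᵢ`. Finally `(U v)ᵢ = -i F_{[UZ]ᵢ}(ω) F′_{[UX]ᵢ}(ω)`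
and `(U w)ᵢ = -i F_{[UX]ᵢ}(ω) F′_{[UZ]ᵢ}(ω)`.
-/

open MeasureTheory ProbabilityTheory Complex Matrix

section LinearAlgebra

variable {n R : Type*} [Fintype n] [DecidableEq n] [CommRing R]

lemma mul_inv_mul_one_sub_mul_inv_add {A B : Matrix n n R} (hB : IsUnit B.det)
    (hAB : IsUnit (A + B).det) :
    A * B⁻¹ * (1 - A * (A + B)⁻¹) = A * (A + B)⁻¹ := by
  have h : 1 - A * (A + B)⁻¹ = B * (A + B)⁻¹ := by
    rw [sub_eq_iff_eq_add, ← add_mul, add_comm B, mul_nonsing_inv _ hAB]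
  rw [h, mul_assoc, ← mul_assoc B⁻¹, nonsing_inv_mul _ hB, one_mul]

lemma mulVec_apply_eq_of_eq_mulVec_add {K M U : Matrix n n R} {d : n → R}
    (hMK : M * (1 - K) = K) (hUM : U * M = diagonal d * U) {v w : n → R}
    (hv : v = K *ᵥ (v + w)) (i : n) : (U *ᵥ v) i = d i * (U *ᵥ w) i := by
  have hv' : (1 - K) *ᵥ v = K *ᵥ w := by
    rw [sub_mulVec, one_mulVec, sub_eq_iff_eq_add, ← mulVec_add, add_comm, ← hv]
  have hvw : v = M *ᵥ w := calc
    v = K *ᵥ v + K *ᵥ w := by rw [← mulVec_add, ← hv]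
    _ = M *ᵥ (K *ᵥ w) + K *ᵥ w := by rw [← hv', mulVec_mulVec, hMK]
    _ = (M * K + M * (1 - K)) *ᵥ w := by rw [hMK, add_mulVec, mulVec_mulVec]
    _ = M *ᵥ w := by rw [← mul_add, add_sub_cancel, mul_one]
  rw [hvw, mulVec_mulVec, hUM, ← mulVec_mulVec, mulVec_diagonal]

lemma map_mulVec_apply_eq_of_eq_map_mulVec_add {S : Type*} [CommRing S] (f : R →+* S)
    {A B U : Matrix n n R} {d : n → R} (hB : IsUnit B.det) (hAB : IsUnit (A + B).det)
    (hU : IsUnit U.det) (hdiag : A * B⁻¹ = U⁻¹ * diagonal d * U) {v w : n → S}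
    (hv : v = (A * (A + B)⁻¹).map f *ᵥ (v + w)) (i : n) :
    (U.map f *ᵥ v) i = f (d i) * (U.map f *ᵥ w) i := by
  have hUM : U * (A * B⁻¹) = diagonal d * U := by
    rw [hdiag, ← mul_assoc, ← mul_assoc, mul_nonsing_inv _ hU, one_mul]
  simp only [← RingHom.mapMatrix_apply] at hv ⊢
  refine mulVec_apply_eq_of_eq_mulVec_add (M := f.mapMatrix (A * B⁻¹))
    (d := fun j => f (d j)) ?_ ?_ hv i
  · rw [← map_one f.mapMatrix, ← map_sub, ← map_mul, mul_inv_mul_one_sub_mul_inv_add hB hAB]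
  · rw [← map_mul, hUM, map_mul, RingHom.mapMatrix_apply, diagonal_map (map_zero f)]

end LinearAlgebra

lemma integral_smul_eq_of_condExp_ae_eq {Ω E : Type*} [NormedAddCommGroup E] [NormedSpace ℝ E]
    [CompleteSpace E] {m m₀ : MeasurableSpace Ω} {μ : Measure[m₀] Ω} (hm : m ≤ m₀)
    [SigmaFinite (μ.trim hm)] {f g : Ω → ℝ} {h : Ω → E} (hfg : μ[f|m] =ᵐ[μ] g)
    (hf : Integrable f μ) (hh : AEStronglyMeasurable[m] h μ) (hfh : Integrable (f • h) μ) :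
    ∫ a, f a • h a ∂μ = ∫ a, g a • h a ∂μ := calc
  ∫ a, f a • h a ∂μ = ∫ a, μ[f • h|m] a ∂μ := (integral_condExp hm).symm
  _ = ∫ a, (μ[f|m] • h) a ∂μ :=
    integral_congr_ae (condExp_smul_of_aestronglyMeasurable_right hf hfh hh)
  _ = ∫ a, g a • h a ∂μ := integral_congr_ae (hfg.mono fun a ha => by simp [ha])

section Probability

variable {Ω ι : Type*} [MeasurableSpace Ω] {μ : Measure Ω}

lemma deriv_integral_cexp_mul_I [IsFiniteMeasure μ] {A : Ω → ℝ} (hA : AEMeasurable A μ)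
    (hAint : Integrable A μ) (t : ℝ) :
    deriv (fun w : ℝ => ∫ a, cexp (((w * A a : ℝ) : ℂ) * I) ∂μ) t =
      I * ∫ a, A a • cexp (((t * A a : ℝ) : ℂ) * I) ∂μ := by
  have hchar : (fun w : ℝ => ∫ a, cexp (((w * A a : ℝ) : ℂ) * I) ∂μ) = charFun (μ.map A) := by
    ext w
    rw [charFun_apply_real, integral_map hA (by fun_prop)]
    push_cast
    rfl
  have hmem : MemLp id (1 : ℕ) (μ.map A) := by
    rw [Nat.cast_one, memLp_one_iff_integrable, integrable_map_measure aestronglyMeasurable_id hA]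
    exact hAint
  rw [hchar, ← iteratedDeriv_one, iteratedDeriv_charFun hmem, integral_map hA (by fun_prop)]
  simp

lemma integral_smul_char_add_of_indepFun {X Z : Ω → ι → ℝ} (hX : Measurable X)
    (hZ : Measurable Z) (hXZ : X ⟂ᵢ[μ] Z) {χ : (ι → ℝ) → ℂ} (hχ : Measurable χ)
    (hχ_add : ∀ x z, χ (x + z) = χ x * χ z) (j : ι) :
    ∫ a, X a j • χ (X a + Z a) ∂μ = (∫ a, χ (Z a) ∂μ) * ∫ a, X a j • χ (X a) ∂μ := by
  simp_rw [hχ_add, ← smul_mul_assoc]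
  rw [hXZ.integral_fun_comp_mul_comp (f := fun x => x j • χ x) hX.aemeasurable hZ.aemeasurable
    (by fun_prop) hχ.aestronglyMeasurable, mul_comm]

variable [Fintype ι]

lemma integrable_mulVec_apply {κ : Type*} {X : Ω → ι → ℝ} (hX : ∀ j, Integrable (X · j) μ)
    (U : Matrix κ ι ℝ) (i : κ) : Integrable (fun a => (U *ᵥ X a) i) μ := by
  simp only [mulVec, dotProduct]
  exact integrable_finsetSum _ fun j _ => (hX j).const_mul _

lemma map_ofReal_mulVec_integral_smul_apply {κ : Type*} {X : Ω → ι → ℝ}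
    (hX : ∀ j, Integrable (X · j) μ) {g : Ω → ℂ} (hg : AEStronglyMeasurable g μ)
    (hg_le : ∀ a, ‖g a‖ ≤ 1) (U : Matrix κ ι ℝ) (i : κ) :
    (U.map ofReal *ᵥ fun j => ∫ a, X a j • g a ∂μ) i = ∫ a, (U *ᵥ X a) i • g a ∂μ := by
  have hint : ∀ j, Integrable (fun a => X a j • g a) μ :=
    fun j => (hX j).smul_bdd 1 hg (.of_forall hg_le)
  simp only [mulVec, dotProduct, map_apply, ← integral_const_mul, Finset.sum_smul]
  rw [← integral_finsetSum _ fun j _ => (hint j).const_mul _]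
  refine integral_congr_ae (.of_forall fun a => Finset.sum_congr rfl fun j _ => ?_)
  simp only [real_smul, ofReal_mul, mul_assoc]

lemma integral_smul_comp_eq_mulVec_of_condExp_ae_eq [IsFiniteMeasure μ] {X Y : Ω → ι → ℝ}
    {K : Matrix ι ι ℝ} (hY : Measurable Y) (hX : ∀ j, Integrable (X · j) μ)
    (hYint : ∀ j, Integrable (Y · j) μ)
    (hlin : ∀ j, μ[(X · j) | MeasurableSpace.comap Y inferInstance] =ᵐ[μ] fun a => (K *ᵥ Y a) j)
    {h : (ι → ℝ) → ℂ} (hh : Measurable h) (hh_le : ∀ y, ‖h y‖ ≤ 1) :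
    (fun j => ∫ a, X a j • h (Y a) ∂μ) = K.map ofReal *ᵥ fun j => ∫ a, Y a j • h (Y a) ∂μ := by
  ext j
  have hhY : AEStronglyMeasurable[MeasurableSpace.comap Y inferInstance] (fun a => h (Y a)) μ :=
    (hh.comp (comap_measurable Y)).aestronglyMeasurable
  rw [integral_smul_eq_of_condExp_ae_eq hY.comap_le (hlin j) (hX j) hhY
    ((hX j).smul_bdd 1 (hh.comp hY).aestronglyMeasurable (.of_forall fun a => hh_le _))]
  exact (map_ofReal_mulVec_integral_smul_apply hYint (hh.comp hY).aestronglyMeasurable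
    (fun a => hh_le _) K j).symm

lemma smul_integral_smul_char_eq_mulVec [IsFiniteMeasure μ] {X Z : Ω → ι → ℝ}
    (hX : Measurable X) (hZ : Measurable Z) (hXZ : X ⟂ᵢ[μ] Z)
    (hXint : ∀ j, Integrable (X · j) μ) (hZint : ∀ j, Integrable (Z · j) μ)
    {K : Matrix ι ι ℝ} (hlin : ∀ j, μ[(X · j) | MeasurableSpace.comap (fun a => X a + Z a)
      inferInstance] =ᵐ[μ] fun a => (K *ᵥ (X a + Z a)) j)
    {χ : (ι → ℝ) → ℂ} (hχ : Measurable χ) (hχ_le : ∀ y, ‖χ y‖ ≤ 1)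
    (hχ_add : ∀ x z, χ (x + z) = χ x * χ z) :
    (∫ a, χ (Z a) ∂μ) • (fun j => ∫ a, X a j • χ (X a) ∂μ) =
      K.map ofReal *ᵥ ((∫ a, χ (Z a) ∂μ) • (fun j => ∫ a, X a j • χ (X a) ∂μ) +
        (∫ a, χ (X a) ∂μ) • fun j => ∫ a, Z a j • χ (Z a) ∂μ) := by
  have hint : ∀ {W : Ω → ι → ℝ}, (∀ j, Integrable (W · j) μ) →
      ∀ j, Integrable (fun a => W a j • χ (X a + Z a)) μ := fun hW j =>
    (hW j).smul_bdd 1 (hχ.comp (hX.add hZ)).aestronglyMeasurable (.of_forall fun a => hχ_le _)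
  have hXY := integral_smul_char_add_of_indepFun hX hZ hXZ hχ hχ_add
  have hZY : ∀ j, ∫ a, Z a j • χ (X a + Z a) ∂μ = (∫ a, χ (X a) ∂μ) * ∫ a, Z a j • χ (Z a) ∂μ :=
    by simpa only [add_comm] using integral_smul_char_add_of_indepFun hZ hX hXZ.symm hχ hχ_add
  have hsplit : (fun j => ∫ a, (X a + Z a) j • χ (X a + Z a) ∂μ) =
      (∫ a, χ (Z a) ∂μ) • (fun j => ∫ a, X a j • χ (X a) ∂μ) +
        (∫ a, χ (X a) ∂μ) • fun j => ∫ a, Z a j • χ (Z a) ∂μ := by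
    ext j
    simp only [Pi.add_apply, add_smul]
    rw [integral_add (hint hXint j) (hint hZint j), hXY, hZY]
    rfl
  rw [← hsplit, ← integral_smul_comp_eq_mulVec_of_condExp_ae_eq (Y := fun a => X a + Z a)
    (hX.add hZ) hXint
    (fun j => (hXint j).add (hZint j)) hlin hχ hχ_le]
  ext j
  exact (hXY j).symm

end Probability

theorem vector_mse_linear_implies_marginal_matching_general
    {Ω : Type*} [MeasurableSpace Ω] (μ : Measure Ω) [IsProbabilityMeasure μ]
    (m : ℕ) (X Z : Ω → Fin m → ℝ)
    (hXm : Measurable X) (hZm : Measurable Z)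
    (hindep : IndepFun X Z μ)
    (hXint : ∀ i, Integrable (fun ω => X ω i) μ)
    (hZint : ∀ i, Integrable (fun ω => Z ω i) μ)
    (RX RZ : Matrix (Fin m) (Fin m) ℝ)
    (hRXpd : RX.PosDef) (hRZpd : RZ.PosDef)
    (K : Matrix (Fin m) (Fin m) ℝ) (hK : K = RX * (RX + RZ)⁻¹)
    (U : Matrix (Fin m) (Fin m) ℝ) (hU : IsUnit U.det)
    (lam : Fin m → ℝ)
    (hdiag : RX * RZ⁻¹ = U⁻¹ * Matrix.diagonal lam * U)
    (hlin : ∀ i, μ[(fun ω => X ω i) |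
        MeasurableSpace.comap (fun ω => X ω + Z ω) inferInstance] =ᵐ[μ]
        fun ω => K.mulVec (X ω + Z ω) i) :
    ∀ i : Fin m, ∀ ω : ℝ,
      deriv (fun w : ℝ =>
          ∫ a, Complex.exp (((w * U.mulVec (X a) i : ℝ) : ℂ) * Complex.I) ∂μ) ω *
        (∫ a, Complex.exp (((ω * U.mulVec (Z a) i : ℝ) : ℂ) * Complex.I) ∂μ) =
      (lam i : ℂ) *
        (∫ a, Complex.exp (((ω * U.mulVec (X a) i : ℝ) : ℂ) * Complex.I) ∂μ) *
        deriv (fun w : ℝ =>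
          ∫ a, Complex.exp (((w * U.mulVec (Z a) i : ℝ) : ℂ) * Complex.I) ∂μ) ω := by
  intro i ω
  set χ : (Fin m → ℝ) → ℂ := fun v => cexp (((ω * (U *ᵥ v) i : ℝ) : ℂ) * I)
  have hχ : Measurable χ := by fun_prop
  have hχ_le : ∀ v, ‖χ v‖ ≤ 1 := fun v => (norm_exp_ofReal_mul_I _).le
  have hχ_add : ∀ x z, χ (x + z) = χ x * χ z := fun x z => by
    simp only [χ, mulVec_add, Pi.add_apply, ← exp_add]
    push_cast
    ring_nf
  have hkey := smul_integral_smul_char_eq_mulVec hXm hZm hindep hXint hZint (hK ▸ hlin) hχ hχ_le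
    hχ_add
  have hrow : (U.map ofReal *ᵥ _) i = lam i * (U.map ofReal *ᵥ _) i :=
    map_mulVec_apply_eq_of_eq_map_mulVec_add ofRealHom hRZpd.det_pos.ne'.isUnit
      (hRXpd.add hRZpd).det_pos.ne'.isUnit hU hdiag hkey i
  rw [mulVec_smul, mulVec_smul, Pi.smul_apply, Pi.smul_apply,
    map_ofReal_mulVec_integral_smul_apply (g := fun a => χ (X a)) hXint
      (hχ.comp hXm).aestronglyMeasurable (fun a => hχ_le _),
    map_ofReal_mulVec_integral_smul_apply (g := fun a => χ (Z a)) hZint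
      (hχ.comp hZm).aestronglyMeasurable (fun a => hχ_le _)] at hrow
  rw [deriv_integral_cexp_mul_I (by fun_prop) (integrable_mulVec_apply hXint U i),
    deriv_integral_cexp_mul_I (by fun_prop) (integrable_mulVec_apply hZint U i)]
  linear_combination I * hrow

/-- Corollary 7 of the paper: if the vector MSE optimal estimator
is linear (`E[X|Y] = KY` a.s., componentwise), then for every `i` the scalar
characteristic functions of `[UX]_i = ⟨u_i, X⟩` and `[UZ]_i = ⟨u_i, Z⟩` satisfy the
matching condition `F′_{[UX]_i}(ω) F_{[UZ]_i}(ω) = λ_i F_{[UX]_i}(ω) F′_{[UZ]_i}(ω)`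
for all `ω ∈ ℝ`. -/
theorem vector_mse_linear_implies_marginal_matching
    {Ω : Type*} [MeasurableSpace Ω] (μ : Measure Ω) [IsProbabilityMeasure μ]
    (m : ℕ) (X Z : Ω → Fin m → ℝ)
    (hXm : Measurable X) (hZm : Measurable Z)
    (hindep : IndepFun X Z μ)
    (hXint : ∀ i, Integrable (fun ω => X ω i) μ)
    (hZint : ∀ i, Integrable (fun ω => Z ω i) μ)
    (hXmean : ∀ i, ∫ ω, X ω i ∂μ = 0) (hZmean : ∀ i, ∫ ω, Z ω i ∂μ = 0)
    (hX2 : ∀ i j, Integrable (fun ω => X ω i * X ω j) μ)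
    (hZ2 : ∀ i j, Integrable (fun ω => Z ω i * Z ω j) μ)
    (RX RZ : Matrix (Fin m) (Fin m) ℝ)
    (hRX : ∀ i j, RX i j = ∫ ω, X ω i * X ω j ∂μ)
    (hRZ : ∀ i j, RZ i j = ∫ ω, Z ω i * Z ω j ∂μ)
    (hRXpd : RX.PosDef) (hRZpd : RZ.PosDef)
    (K : Matrix (Fin m) (Fin m) ℝ) (hK : K = RX * (RX + RZ)⁻¹)
    (U : Matrix (Fin m) (Fin m) ℝ) (hU : IsUnit U.det)
    (lam : Fin m → ℝ)
    (hdiag : RX * RZ⁻¹ = U⁻¹ * Matrix.diagonal lam * U)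
    (hlin : ∀ i, μ[(fun ω => X ω i) |
        MeasurableSpace.comap (fun ω => X ω + Z ω) inferInstance] =ᵐ[μ]
        fun ω => K.mulVec (X ω + Z ω) i) :
    ∀ i : Fin m, ∀ ω : ℝ,
      deriv (fun w : ℝ =>
          ∫ a, Complex.exp (((w * U.mulVec (X a) i : ℝ) : ℂ) * Complex.I) ∂μ) ω *
        (∫ a, Complex.exp (((ω * U.mulVec (Z a) i : ℝ) : ℂ) * Complex.I) ∂μ) =
      (lam i : ℂ) *
        (∫ a, Complex.exp (((ω * U.mulVec (X a) i : ℝ) : ℂ) * Complex.I) ∂μ) *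
        deriv (fun w : ℝ =>
          ∫ a, Complex.exp (((w * U.mulVec (Z a) i : ℝ) : ℂ) * Complex.I) ∂μ) ω :=
  vector_mse_linear_implies_marginal_matching_general μ m X Z hXm hZm hindep hXint hZint RX RZ hRXpd
    hRZpd K hK U hU lam hdiag hlin
end
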